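/- For every pair of positive integers k and ℓ, χ'_st(C_{3k} □ C_{3ℓ}) = 6. -/

import Mathlib

/-!
Lower bound. Fix two colours `a ≠ b` of a star edge-colouring. The edges coloured `a` or `b` form
a graph of maximum degree 2 whose components are paths with at most three edges, so each of its
vertices of degree 2 has a neighbour of degree 1, and its degree sum is at most `3|V|/2`. Summing
over the ordered pairs of distinct colours counts every edge `2(m - 1)` times, so for a `d`-regular
graph `4d(m - 1)|V| ≤ 3m(m - 1)|V|`, i.e. `m ≥ 4d/3`; for `d = 4` this is `m ≥ 6`.

Upper bound. Reduction mod 3 is a homomorphism `C_{3k} □ C_{3ℓ} → C_3 □ C_3` that is injective on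
every neighbourhood, so it maps 4-edge paths and 4-cycles to non-backtracking walks. A colouring
of `C_3 □ C_3` in which no non-backtracking walk of length 4 has alternating colours therefore
pulls back to a star edge-colouring, and such a colouring with 6 colours is found by exhaustion.
-/

open SimpleGraph

/-- A star edge-coloring with `k` colors: a proper edge-coloring (adjacent edges get distinct
colors) such that no path with four edges and no cycle with four edges is bichromatic. -/
def IsStarEdgeColoring {V : Type*} (G : SimpleGraph V) {k : ℕ} (C : Sym2 V → Fin k) : Prop :=
  (∀ e₁ ∈ G.edgeSet, ∀ e₂ ∈ G.edgeSet, e₁ ≠ e₂ → (∃ v, v ∈ e₁ ∧ v ∈ e₂) → C e₁ ≠ C e₂) ∧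
  (∀ (u v : V) (w : G.Walk u v), w.length = 4 → w.IsPath →
    ¬ ∃ a b : Fin k, ∀ e ∈ w.edges, C e = a ∨ C e = b) ∧
  (∀ (u : V) (w : G.Walk u u), w.length = 4 → w.IsCycle →
    ¬ ∃ a b : Fin k, ∀ e ∈ w.edges, C e = a ∨ C e = b)

/-- The star chromatic index: the least `k` admitting a star edge-coloring with `k` colors. -/
noncomputable def starChromaticIndex {V : Type*} (G : SimpleGraph V) : ℕ :=
  sInf {k | ∃ C : Sym2 V → Fin k, IsStarEdgeColoring G C}

open Finset

theorem eq_of_ne_of_mem_pair {α : Type*} {a b p q r : α} (hp : p = a ∨ p = b)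
    (hq : q = a ∨ q = b) (hr : r = a ∨ r = b) (hpq : p ≠ q) (hrq : r ≠ q) : p = r := by
  grind

theorem Finset.sum_sum_erase_add_two_mul_sum {ι : Type*} [Fintype ι] [DecidableEq ι]
    (x : ι → ℕ) :
    ∑ a, ∑ b ∈ univ.erase a, (x a + x b) + 2 * ∑ a, x a = 2 * Fintype.card ι * ∑ a, x a := by
  have hdiag : ∀ a, ∑ b ∈ univ.erase a, (x a + x b) + (x a + x a) = ∑ b, (x a + x b) :=
    fun a => sum_erase_add _ _ (mem_univ a)
  calc ∑ a, ∑ b ∈ univ.erase a, (x a + x b) + 2 * ∑ a, x a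
      = ∑ a, ∑ b, (x a + x b) := by
        rw [← sum_congr rfl fun a _ => hdiag a, sum_add_distrib, two_mul, sum_add_distrib]
    _ = 2 * Fintype.card ι * ∑ a, x a := by
        simp only [sum_add_distrib, sum_const, card_univ, smul_eq_mul, ← mul_sum]
        ring

namespace SimpleGraph

variable {V W V' W' α : Type*}

section LowerBound

theorem two_mul_sum_degree_le_three_mul_card [Fintype V] (H : SimpleGraph V) [DecidableRel H.Adj]
    (hmax : ∀ v, H.degree v ≤ 2) (hleaf : ∀ v, H.degree v = 2 → ∃ u, H.Adj v u ∧ H.degree u = 1) :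
    2 * ∑ v, H.degree v ≤ 3 * Fintype.card V := by
  choose! f hadj hf using hleaf
  have hinj : #{v | H.degree v = 2} ≤ #{v | H.degree v = 1} := by
    refine card_le_card_of_injOn f (fun v hv => ?_) fun v₁ hv₁ v₂ hv₂ he => ?_
    · simp only [coe_filter, mem_univ, true_and, Set.mem_ofPred_eq] at hv ⊢
      exact hf v hv
    · simp only [coe_filter, mem_univ, true_and, Set.mem_ofPred_eq] at hv₁ hv₂
      have hleaf : #(H.neighborFinset (f v₁)) = 1 := by
        rw [card_neighborFinset_eq_degree, hf v₁ hv₁]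
      refine card_le_one.mp hleaf.le _ ?_ _ ?_
      · exact (mem_neighborFinset _ _ _).mpr (hadj v₁ hv₁).symm
      · exact (mem_neighborFinset _ _ _).mpr (he ▸ (hadj v₂ hv₂).symm)
  have hpoint : ∀ v, 2 * H.degree v + (if H.degree v = 1 then 1 else 0) ≤
      3 + (if H.degree v = 2 then 1 else 0) := fun v => by
    have := hmax v
    split_ifs <;> omega
  have hsum := sum_le_sum fun v (_ : v ∈ univ) => hpoint v
  simp only [sum_add_distrib, sum_boole, ← mul_sum, sum_const, card_univ, smul_eq_mul] at hsum
  push_cast at hsum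
  omega

@[simps]
def bichromaticGraph (G : SimpleGraph V) (C : Sym2 V → α) (a b : α) : SimpleGraph V where
  Adj v u := G.Adj v u ∧ (C s(v, u) = a ∨ C s(v, u) = b)
  symm := ⟨fun v u h => by rwa [Sym2.eq_swap, G.adj_comm]⟩
  loopless := ⟨fun v h => G.loopless.irrefl v h.1⟩

instance (G : SimpleGraph V) [DecidableRel G.Adj] [DecidableEq α] (C : Sym2 V → α) (a b : α) :
    DecidableRel (G.bichromaticGraph C a b).Adj :=
  fun _ _ => inferInstanceAs (Decidable (_ ∧ _))

variable {G : SimpleGraph V}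

theorem neighborFinset_bichromaticGraph [Fintype V] [DecidableRel G.Adj] [DecidableEq α]
    (C : Sym2 V → α) (a b : α) (v : V) :
    (G.bichromaticGraph C a b).neighborFinset v =
      {u ∈ G.neighborFinset v | C s(v, u) = a ∨ C s(v, u) = b} := by
  ext u
  simp

theorem degree_bichromaticGraph_of_ne [Fintype V] [DecidableRel G.Adj] [DecidableEq α]
    (C : Sym2 V → α) {a b : α} (hab : a ≠ b) (v : V) :
    (G.bichromaticGraph C a b).degree v =
      (G.bichromaticGraph C a a).degree v + (G.bichromaticGraph C b b).degree v := by
  classical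
  simp only [← card_neighborFinset_eq_degree, neighborFinset_bichromaticGraph, or_self]
  rw [filter_or]
  exact card_union_of_disjoint (disjoint_filter.mpr fun u _ ha hb => hab (ha.symm.trans hb))

theorem sum_degree_bichromaticGraph_self [Fintype V] [DecidableRel G.Adj] [Fintype α]
    [DecidableEq α] (C : Sym2 V → α) (v : V) :
    ∑ a, (G.bichromaticGraph C a a).degree v = G.degree v := by
  simp only [← card_neighborFinset_eq_degree, neighborFinset_bichromaticGraph, or_self]
  exact (card_eq_sum_card_fiberwise fun u _ => mem_coe.mpr (mem_univ (C s(v, u)))).symm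

namespace IsStarEdgeColoring

variable {m : ℕ} {C : Sym2 V → Fin m}

theorem color_ne (hC : IsStarEdgeColoring G C) {v u w : V} (hu : G.Adj v u) (hw : G.Adj v w)
    (huw : u ≠ w) : C s(v, u) ≠ C s(v, w) :=
  hC.1 _ hu _ hw (by simp [huw, hw.ne]) ⟨v, Sym2.mem_mk_left _ _, Sym2.mem_mk_left _ _⟩

theorem degree_bichromaticGraph_le [Fintype V] [DecidableRel G.Adj] (hC : IsStarEdgeColoring G C)
    (a b : Fin m) (v : V) : (G.bichromaticGraph C a b).degree v ≤ #{a, b} := by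
  rw [← card_neighborFinset_eq_degree, neighborFinset_bichromaticGraph]
  refine card_le_card_of_injOn (fun u => C s(v, u)) (fun u hu => ?_) fun u₁ hu₁ u₂ hu₂ he => ?_
  · simp only [coe_filter, mem_neighborFinset, Set.mem_ofPred_eq] at hu
    simp [hu.2]
  · simp only [coe_filter, mem_neighborFinset, Set.mem_ofPred_eq] at hu₁ hu₂
    by_contra hne
    exact hC.color_ne hu₁.1 hu₂.1 hne he

theorem degree_le [Fintype V] [DecidableRel G.Adj] (hC : IsStarEdgeColoring G C) (v : V) :
    G.degree v ≤ m := by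
  rw [← sum_degree_bichromaticGraph_self C v]
  calc ∑ a, (G.bichromaticGraph C a a).degree v ≤ ∑ a : Fin m, #{a, a} :=
        sum_le_sum fun a _ => hC.degree_bichromaticGraph_le a a v
    _ = m := by simp

theorem not_bichromatic_chain (hC : IsStarEdgeColoring G C) {a b : Fin m} {t u v w x : V}
    (htu : G.Adj t u) (huv : G.Adj u v) (hvw : G.Adj v w) (hwx : G.Adj w x)
    (htv : t ≠ v) (htw : t ≠ w) (huw : u ≠ w) (hux : u ≠ x) (hvx : v ≠ x)
    (h₁ : C s(t, u) = a ∨ C s(t, u) = b) (h₂ : C s(u, v) = a ∨ C s(u, v) = b)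
    (h₃ : C s(v, w) = a ∨ C s(v, w) = b) (h₄ : C s(w, x) = a ∨ C s(w, x) = b) : False := by
  have hcol : ∀ e ∈ (Walk.cons htu (.cons huv (.cons hvw (.cons hwx .nil)))).edges,
      C e = a ∨ C e = b := by
    simp only [Walk.edges_cons, Walk.edges_nil, List.mem_cons, List.not_mem_nil, or_false]
    rintro e (rfl | rfl | rfl | rfl) <;> assumption
  by_cases htx : t = x
  · subst htx
    refine hC.2.2 t _ rfl ?_ ⟨a, b, hcol⟩
    rw [Walk.cons_isCycle_iff]
    simp [htv, htw, huw, hvw.ne, huv.ne, hwx.ne, hvx, hux]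
  · refine hC.2.1 t x _ rfl ?_ ⟨a, b, hcol⟩
    simp [htu.ne, htv, htw, htx, huv.ne, huw, hux, hvw.ne, hvx, hwx.ne]

theorem exists_adj_degree_eq_one [Fintype V] [DecidableRel G.Adj] (hC : IsStarEdgeColoring G C)
    {a b : Fin m} {v : V} (hv : (G.bichromaticGraph C a b).degree v = 2) :
    ∃ u, (G.bichromaticGraph C a b).Adj v u ∧ (G.bichromaticGraph C a b).degree u = 1 := by
  classical
  set H := G.bichromaticGraph C a b
  have hnext : ∀ {u x}, H.Adj u x → H.degree u ≠ 1 → ∃ t, H.Adj u t ∧ t ≠ x := by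
    intro u x hux hu
    have hpos := (H.degree_pos_iff_exists_adj u).mpr ⟨x, hux⟩
    obtain ⟨t, ht, htx⟩ := exists_mem_ne (s := H.neighborFinset u)
      (by rw [card_neighborFinset_eq_degree]; omega) x
    exact ⟨t, (mem_neighborFinset _ _ _).mp ht, htx⟩
  obtain ⟨u, w, huw, hN⟩ := card_eq_two.mp ((card_neighborFinset_eq_degree H v).trans hv)
  have hvu : H.Adj v u := (mem_neighborFinset _ _ _).mp (by simp [hN])
  have hvw : H.Adj v w := (mem_neighborFinset _ _ _).mp (by simp [hN])
  by_contra! hleaf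
  obtain ⟨t, hut, htv⟩ := hnext hvu.symm (hleaf u hvu)
  obtain ⟨x, hwx, hxv⟩ := hnext hvw.symm (hleaf w hvw)
  have hvu_vw : C s(v, u) ≠ C s(v, w) := hC.color_ne hvu.1 hvw.1 huw
  have hut_col : C s(u, t) = C s(v, w) := by
    refine eq_of_ne_of_mem_pair hut.2 hvu.symm.2 hvw.2 (hC.color_ne hut.1 hvu.1.symm htv) ?_
    rw [Sym2.eq_swap (a := u)]
    exact hvu_vw.symm
  have hwx_col : C s(w, x) = C s(v, u) := by
    refine eq_of_ne_of_mem_pair hwx.2 hvw.symm.2 hvu.2 (hC.color_ne hwx.1 hvw.1.symm hxv) ?_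
    rw [Sym2.eq_swap (a := w)]
    exact hvu_vw
  have htw : t ≠ w := by
    rintro rfl
    refine hC.color_ne hut.1.symm hvw.1.symm hvu.1.ne' ?_
    rw [Sym2.eq_swap, hut_col, Sym2.eq_swap]
  have hux : u ≠ x := by
    rintro rfl
    refine hC.color_ne hwx.1.symm hvu.1.symm hvw.1.ne' ?_
    rw [Sym2.eq_swap, hwx_col, Sym2.eq_swap]
  exact hC.not_bichromatic_chain hut.1.symm hvu.1.symm hvw.1 hwx.1 htv htw huw hux hxv.symm
    hut.symm.2 hvu.symm.2 hvw.2 hwx.2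

theorem two_mul_sum_degree_bichromaticGraph_le [Fintype V] [DecidableRel G.Adj]
    (hC : IsStarEdgeColoring G C) (a b : Fin m) :
    2 * ∑ v, (G.bichromaticGraph C a b).degree v ≤ 3 * Fintype.card V :=
  two_mul_sum_degree_le_three_mul_card _
    (fun v => (hC.degree_bichromaticGraph_le a b v).trans card_le_two)
    fun _ => hC.exists_adj_degree_eq_one

theorem four_mul_le_three_mul [Fintype V] [Nonempty V] [DecidableRel G.Adj] {d : ℕ}
    (hC : IsStarEdgeColoring G C) (hreg : G.IsRegularOfDegree d) (hd : 2 ≤ d) :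
    4 * d ≤ 3 * m := by
  set N := Fintype.card V
  set D := fun a b v => (G.bichromaticGraph C a b).degree v
  have hdm := hreg.degree_eq (Classical.arbitrary V) ▸ hC.degree_le (Classical.arbitrary V)
  obtain ⟨m, rfl⟩ : ∃ m', m = m' + 1 := ⟨m - 1, by omega⟩
  have hvertex : ∀ v, ∑ a, ∑ b ∈ univ.erase a, D a b v + 2 * d = 2 * (m + 1) * d := by
    intro v
    have h := sum_sum_erase_add_two_mul_sum fun a => (G.bichromaticGraph C a a).degree v
    rw [Fintype.card_fin] at h
    rw [← hreg.degree_eq v, ← sum_degree_bichromaticGraph_self C v, ← h]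
    congr 1
    exact sum_congr rfl fun a _ => sum_congr rfl fun b hb =>
      degree_bichromaticGraph_of_ne C (ne_of_mem_erase hb).symm v
  have hvertices : ∑ v, ∑ a, ∑ b ∈ univ.erase a, D a b v + 2 * d * N = 2 * (m + 1) * d * N := by
    simpa [sum_add_distrib, N, mul_comm] using sum_congr rfl fun v (_ : v ∈ univ) => hvertex v
  have hpairs : 2 * ∑ v, ∑ a, ∑ b ∈ univ.erase a, D a b v ≤ (m + 1) * m * (3 * N) := calc
    2 * ∑ v, ∑ a, ∑ b ∈ univ.erase a, D a b v
        = ∑ a, ∑ b ∈ univ.erase a, 2 * ∑ v, D a b v := by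
      simp only [mul_sum]
      rw [sum_comm]
      exact sum_congr rfl fun a _ => sum_comm
    _ ≤ ∑ a : Fin (m + 1), ∑ b ∈ univ.erase a, 3 * N :=
      sum_le_sum fun a _ => sum_le_sum fun b _ => hC.two_mul_sum_degree_bichromaticGraph_le a b
    _ = (m + 1) * m * (3 * N) := by simp [card_erase_of_mem, mul_assoc]
  have hN : 0 < N := Fintype.card_pos
  have hm : 0 < m := by omega
  have : 4 * d * (m * N) ≤ 3 * (m + 1) * (m * N) := by nlinarith
  exact Nat.le_of_mul_le_mul_right this (by positivity)

end IsStarEdgeColoring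

end LowerBound

section UpperBound

/-- Under a proper colouring, a non-backtracking walk of length 4 is bichromatic exactly when its
colours alternate. Unlike star colourings, this property pulls back along locally injective
homomorphisms. -/
def IsNonbacktrackingStarColoring (G : SimpleGraph V) (C : Sym2 V → α) : Prop :=
  (∀ ⦃v u w⦄, G.Adj v u → G.Adj v w → u ≠ w → C s(v, u) ≠ C s(v, w)) ∧
  ∀ ⦃p₀ p₁⦄, G.Adj p₀ p₁ → ∀ ⦃p₂⦄, G.Adj p₁ p₂ → p₀ ≠ p₂ → ∀ ⦃p₃⦄, G.Adj p₂ p₃ → p₁ ≠ p₃ →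
    ∀ ⦃p₄⦄, G.Adj p₃ p₄ → p₂ ≠ p₄ → C s(p₀, p₁) = C s(p₂, p₃) → C s(p₁, p₂) ≠ C s(p₃, p₄)

namespace IsNonbacktrackingStarColoring

variable {G : SimpleGraph V}

theorem not_bichromatic_of_isTrail {C : Sym2 V → α} (hC : IsNonbacktrackingStarColoring G C)
    {u v : V} {w : G.Walk u v} (hw : w.IsTrail) (hlen : w.length = 4) :
    ¬∃ a b, ∀ e ∈ w.edges, C e = a ∨ C e = b := by
  rintro ⟨a, b, hab⟩
  rcases w with _ | @⟨_, p₁, _, h₁, _ | @⟨_, p₂, _, h₂, _ | @⟨_, p₃, _, h₃, _ | @⟨_, p₄, _, h₄,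
    _ | ⟨_, w⟩⟩⟩⟩⟩ <;> simp only [Walk.length_cons, Walk.length_nil] at hlen <;> try omega
  simp only [Walk.edges_cons, Walk.edges_nil, List.mem_cons, List.not_mem_nil, or_false,
    forall_eq_or_imp, forall_eq] at hab
  obtain ⟨c₁, c₂, c₃, c₄⟩ := hab
  have h₀₂ : u ≠ p₂ := by rintro rfl; simp [Walk.isTrail_cons] at hw
  have h₁₃ : p₁ ≠ p₃ := by rintro rfl; simp [Walk.isTrail_cons] at hw
  have h₂₄ : p₂ ≠ v := by rintro rfl; simp [Walk.isTrail_cons] at hw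
  have c₁₂ : C s(u, p₁) ≠ C s(p₁, p₂) := by
    simpa only [Sym2.eq_swap (a := u)] using hC.1 h₁.symm h₂ h₀₂
  have c₂₃ : C s(p₁, p₂) ≠ C s(p₂, p₃) := by
    simpa only [Sym2.eq_swap (a := p₁)] using hC.1 h₂.symm h₃ h₁₃
  have c₃₄ : C s(p₂, p₃) ≠ C s(p₃, v) := by
    simpa only [Sym2.eq_swap (a := p₂)] using hC.1 h₃.symm h₄ h₂₄
  exact hC.2 h₁ h₂ h₀₂ h₃ h₁₃ h₄ h₂₄ (eq_of_ne_of_mem_pair c₁ c₂ c₃ c₁₂ c₂₃.symm)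
    (eq_of_ne_of_mem_pair c₂ c₃ c₄ c₂₃ c₃₄.symm)

theorem isStarEdgeColoring {m : ℕ} {C : Sym2 V → Fin m} (hC : IsNonbacktrackingStarColoring G C) :
    IsStarEdgeColoring G C := by
  refine ⟨?_, fun u v w hlen hw => hC.not_bichromatic_of_isTrail hw.isTrail hlen,
    fun u w hlen hw => hC.not_bichromatic_of_isTrail hw.isTrail hlen⟩
  rintro e₁ he₁ e₂ he₂ hne ⟨v, hv₁, hv₂⟩
  obtain ⟨u, rfl⟩ := Sym2.mem_iff_exists.mp hv₁
  obtain ⟨w, rfl⟩ := Sym2.mem_iff_exists.mp hv₂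
  exact hC.1 he₁ he₂ fun huw => hne (huw ▸ rfl)

end IsNonbacktrackingStarColoring

def Hom.IsLocallyInjective {G : SimpleGraph V} {H : SimpleGraph W} (f : G →g H) : Prop :=
  ∀ ⦃v u w⦄, G.Adj v u → G.Adj v w → f u = f w → u = w

theorem IsNonbacktrackingStarColoring.comap {G : SimpleGraph V} {H : SimpleGraph W}
    {C : Sym2 W → α} (hC : H.IsNonbacktrackingStarColoring C) {f : G →g H}
    (hf : f.IsLocallyInjective) : G.IsNonbacktrackingStarColoring (C ∘ Sym2.map f) := by
  have hne : ∀ {v u w}, G.Adj v u → G.Adj v w → u ≠ w → f u ≠ f w :=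
    fun hu hw huw he => huw (hf hu hw he)
  refine ⟨fun v u w hu hw huw => ?_, fun p₀ p₁ h₁ p₂ h₂ h₀₂ p₃ h₃ h₁₃ p₄ h₄ h₂₄ => ?_⟩
  · simpa using hC.1 (f.map_adj hu) (f.map_adj hw) (hne hu hw huw)
  · simpa using hC.2 (f.map_adj h₁) (f.map_adj h₂) (hne h₁.symm h₂ h₀₂) (f.map_adj h₃)
      (hne h₂.symm h₃ h₁₃) (f.map_adj h₄) (hne h₃.symm h₄ h₂₄)

def Hom.boxProdMap {G : SimpleGraph V} {G' : SimpleGraph V'} {H : SimpleGraph W}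
    {H' : SimpleGraph W'} (f : G →g G') (g : H →g H') : (G □ H) →g (G' □ H') where
  toFun := Prod.map f g
  map_rel' h := by
    rcases boxProd_adj.mp h with ⟨h, he⟩ | ⟨h, he⟩
    · exact boxProd_adj.mpr (Or.inl ⟨f.map_adj h, congrArg g he⟩)
    · exact boxProd_adj.mpr (Or.inr ⟨g.map_adj h, congrArg f he⟩)

theorem Hom.IsLocallyInjective.boxProdMap {G : SimpleGraph V} {G' : SimpleGraph V'}
    {H : SimpleGraph W} {H' : SimpleGraph W'} {f : G →g G'} {g : H →g H'}
    (hf : f.IsLocallyInjective) (hg : g.IsLocallyInjective) :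
    (f.boxProdMap g).IsLocallyInjective := by
  intro v u w hu hw he
  obtain ⟨he₁, he₂⟩ := Prod.ext_iff.mp he
  change f u.1 = f w.1 at he₁
  change g u.2 = g w.2 at he₂
  rcases boxProd_adj.mp hu with ⟨hu, hu'⟩ | ⟨hu, hu'⟩ <;>
    rcases boxProd_adj.mp hw with ⟨hw, hw'⟩ | ⟨hw, hw'⟩
  · exact Prod.ext (hf hu hw he₁) (hu'.symm.trans hw')
  · exact absurd (he₁.trans (congrArg f hw'.symm)) (f.map_adj hu).ne'
  · exact absurd (he₂.trans (congrArg g hw'.symm)) (g.map_adj hu).ne'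
  · exact Prod.ext (hu'.symm.trans hw') (hg hu hw he₂)

theorem cycleGraph_adj_iff_modEq {N : ℕ} (hN : N ≠ 1) {u v : Fin N} :
    (cycleGraph N).Adj u v ↔ u.val ≡ v.val + 1 [MOD N] ∨ v.val ≡ u.val + 1 [MOD N] := by
  match N, hN with
  | 0, _ => exact u.elim0
  | n + 2, _ =>
    rw [cycleGraph_adj, sub_eq_iff_eq_add', sub_eq_iff_eq_add', Fin.ext_iff, Fin.ext_iff,
      Fin.val_add, Fin.val_add, Fin.val_one, Nat.ModEq, Nat.ModEq, Nat.mod_eq_of_lt u.isLt,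
      Nat.mod_eq_of_lt v.isLt]

def cycleGraphCover {n N : ℕ} (hn : 2 ≤ n) (hdvd : n ∣ N) : cycleGraph N →g cycleGraph n where
  toFun u := ⟨u.val % n, Nat.mod_lt _ (by omega)⟩
  map_rel' {u v} h := by
    have hN : N ≠ 1 := by
      rintro rfl
      exact cycleGraph_one_adj h
    rw [cycleGraph_adj_iff_modEq hN] at h
    rw [cycleGraph_adj_iff_modEq (by omega)]
    rcases h with h | h
    · exact Or.inl ((Nat.mod_modEq _ _).trans
        ((h.of_dvd hdvd).trans ((Nat.mod_modEq _ _).symm.add_right 1)))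
    · exact Or.inr ((Nat.mod_modEq _ _).trans
        ((h.of_dvd hdvd).trans ((Nat.mod_modEq _ _).symm.add_right 1)))

theorem isLocallyInjective_cycleGraphCover {n N : ℕ} (hn : 3 ≤ n) (hdvd : n ∣ N) :
    (cycleGraphCover (by omega) hdvd).IsLocallyInjective := by
  intro v u w hu hw he
  have hmod : u.val ≡ w.val [MOD n] := Fin.ext_iff.mp he
  have hN : N ≠ 1 := by
    rintro rfl
    exact cycleGraph_one_adj hu
  have not_two : ∀ {x y : ℕ}, x ≡ y [MOD n] → ¬ y ≡ x + 1 + 1 [MOD n] := by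
    intro x y hxy h
    have : 2 ≡ 0 [MOD n] :=
      Nat.ModEq.add_left_cancel' x (by simpa [add_assoc] using (hxy.trans h).symm)
    exact absurd (Nat.le_of_dvd two_pos (Nat.modEq_zero_iff_dvd.mp this)) (by omega)
  rw [cycleGraph_adj_iff_modEq hN] at hu hw
  rcases hu with hu | hu <;> rcases hw with hw | hw
  · exact Fin.ext ((Nat.ModEq.add_right_cancel' 1 (hu.symm.trans hw)).eq_of_lt_of_lt u.isLt w.isLt)
  · exact absurd ((hw.of_dvd hdvd).trans ((hu.of_dvd hdvd).add_right 1)) (not_two hmod)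
  · exact absurd ((hu.of_dvd hdvd).trans ((hw.of_dvd hdvd).add_right 1)) (not_two hmod.symm)
  · exact Fin.ext ((hu.trans hw.symm).eq_of_lt_of_lt u.isLt w.isLt)

instance [DecidableEq V] [DecidableEq W] (G : SimpleGraph V) (H : SimpleGraph W)
    [DecidableRel G.Adj] [DecidableRel H.Adj] : DecidableRel (G □ H).Adj :=
  fun _ _ => decidable_of_iff' _ boxProd_adj

/-- Rows and columns get disjoint palettes of three colours; as `C₃ = K₃`, an edge inside a row
or a column is determined by the sum of its endpoints. -/
def rookColoring : Sym2 (Fin 3 × Fin 3) → Fin 6 :=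
  Sym2.lift ⟨fun p q => finProdFinEquiv
    (if p.2 = q.2 then (0, (p + q).1 + (p + q).2) else (1, (p + q).2 - (p + q).1) : Fin 2 × Fin 3),
    by decide⟩

set_option synthInstance.maxSize 2000 in
theorem isNonbacktrackingStarColoring_rookColoring :
    (cycleGraph 3 □ cycleGraph 3).IsNonbacktrackingStarColoring rookColoring := by
  unfold IsNonbacktrackingStarColoring
  decide

end UpperBound

theorem isRegularOfDegree_cycleGraph {n : ℕ} (hn : 3 ≤ n) :
    (cycleGraph n).IsRegularOfDegree 2 := by
  obtain ⟨n, rfl⟩ : ∃ m, n = m + 3 := ⟨n - 3, by omega⟩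
  exact fun _ => cycleGraph_degree_three_le

end SimpleGraph

theorem stmt_10 (k l : ℕ) (hk : 1 ≤ k) (hl : 1 ≤ l) :
    starChromaticIndex (cycleGraph (3 * k) □ cycleGraph (3 * l)) = 6 := by
  have hupper : ∃ C : Sym2 (Fin (3 * k) × Fin (3 * l)) → Fin 6,
      IsStarEdgeColoring (cycleGraph (3 * k) □ cycleGraph (3 * l)) C :=
    ⟨_, (isNonbacktrackingStarColoring_rookColoring.comap
      ((isLocallyInjective_cycleGraphCover le_rfl (dvd_mul_right 3 k)).boxProdMap
        (isLocallyInjective_cycleGraphCover le_rfl (dvd_mul_right 3 l)))).isStarEdgeColoring⟩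
  have hlower : ∀ m (C : Sym2 (Fin (3 * k) × Fin (3 * l)) → Fin m),
      IsStarEdgeColoring (cycleGraph (3 * k) □ cycleGraph (3 * l)) C → 6 ≤ m := by
    intro m C hC
    have : NeZero (3 * k) := ⟨by omega⟩
    have : NeZero (3 * l) := ⟨by omega⟩
    have := hC.four_mul_le_three_mul (d := 2 + 2) (fun v => by
      rw [degree_boxProd, (isRegularOfDegree_cycleGraph (by omega)).degree_eq,
        (isRegularOfDegree_cycleGraph (by omega)).degree_eq]) (by norm_num)
    omega
  exact le_antisymm (Nat.sInf_le hupper) (le_csInf ⟨6, hupper⟩ fun m ⟨C, hC⟩ => hlower m C hC)
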